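/- arXiv:2503.00500 — 5 statements merged into one kernel-verified Lean document; each statement's English description precedes it below -/
import Mathlib

section
/- Let K be a field of characteristic 0, r ≥ 1, and A an r×r matrix over K[[τ]] with vanishing constant term; write A¹ for the coefficient of τ in A. Assume A¹ is non-resonant in the sense that for every nonzero integer n, the K-linear map X ↦ A¹X − XA¹ − n·X on r×r matrices over K is bijective. Then for every r×r matrix E⁰ over K with A¹E⁰ = E⁰A¹, there exists a unique r×r matrix E over K[[τ]] that is covariantly constant for A and has constant term E⁰. -/
/-- The entrywise formal derivative of a matrix of power series. -/
noncomputable def matDeriv {K : Type} [CommRing K] {r : ℕ}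
    (E : Matrix (Fin r) (Fin r) (PowerSeries K)) : Matrix (Fin r) (Fin r) (PowerSeries K) :=
  fun i j => PowerSeries.derivative K (E i j)

/-- The constant term (evaluation at `τ = 0`) of a matrix of power series. -/
noncomputable def constTerm {K : Type} [CommRing K] {r : ℕ}
    (E : Matrix (Fin r) (Fin r) (PowerSeries K)) : Matrix (Fin r) (Fin r) K :=
  fun i j => PowerSeries.constantCoeff (E i j)

/-- `E` is covariantly constant for `A` (w.r.t. `∇ = τ²d/dτ + A`):
`τ²·(dE/dτ) + A·E − E·A = 0`. -/
def IsCovariantlyConstant {K : Type} [CommRing K] {r : ℕ}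
    (A E : Matrix (Fin r) (Fin r) (PowerSeries K)) : Prop :=
  (PowerSeries.X ^ 2 : PowerSeries K) • matDeriv E + A * E - E * A = 0

open Finset PowerSeries

namespace CovAux

variable {K : Type} [Field K] {r : ℕ}

/-- coefficient matrix -/
noncomputable def cM (n : ℕ) (E : Matrix (Fin r) (Fin r) (PowerSeries K)) :
    Matrix (Fin r) (Fin r) K :=
  fun i j => PowerSeries.coeff n (E i j)

lemma cM_mul (n : ℕ) (P Q : Matrix (Fin r) (Fin r) (PowerSeries K)) :
    cM n (P * Q) = ∑ m ∈ Finset.range (n+1), cM m P * cM (n-m) Q := by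
  funext i j
  simp only [cM, Matrix.mul_apply, map_sum, PowerSeries.coeff_mul,
    Finset.Nat.sum_antidiagonal_eq_sum_range_succ_mk, Matrix.sum_apply]
  rw [Finset.sum_comm]

lemma cM_X2_deriv (n : ℕ) (E : Matrix (Fin r) (Fin r) (PowerSeries K)) :
    cM n ((PowerSeries.X ^ 2 : PowerSeries K) • matDeriv E)
      = ((n-1 : ℕ) : K) • cM (n-1) E := by
  funext i j
  show PowerSeries.coeff n ((PowerSeries.X ^ 2 : PowerSeries K) * PowerSeries.derivative K (E i j))
      = ((n-1 : ℕ) : K) * PowerSeries.coeff (n-1) (E i j)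
  rw [PowerSeries.coeff_X_pow_mul']
  rcases n with _ | _ | m
  · simp
  · simp
  · rw [if_pos (by omega)]
    show PowerSeries.coeff m (PowerSeries.derivative K (E i j)) = _
    rw [PowerSeries.coeff_derivative]
    have : m + 1 + 1 - 1 = m + 1 := by omega
    rw [this]
    push_cast
    ring

lemma cM_reflect (n : ℕ) (E A : Matrix (Fin r) (Fin r) (PowerSeries K)) :
    cM n (E * A) = ∑ m ∈ Finset.range (n+1), cM (n-m) E * cM m A := by
  have h := Finset.sum_range_reflect (fun m => cM (n-m) E * cM m A) (n+1)
  rw [cM_mul, ← h]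
  refine Finset.sum_congr rfl fun m hm => ?_
  have hm' : m ≤ n := Nat.lt_succ_iff.mp (Finset.mem_range.mp hm)
  have e1 : n + 1 - 1 - m = n - m := by omega
  have e2 : n - (n - m) = m := by omega
  simp only [e1, e2]

lemma icc_iff (A E : Matrix (Fin r) (Fin r) (PowerSeries K)) :
    IsCovariantlyConstant A E ↔ ∀ n : ℕ,
      ((n-1 : ℕ) : K) • cM (n-1) E
        + ∑ m ∈ Finset.range (n+1), (cM m A * cM (n-m) E - cM (n-m) E * cM m A) = 0 := by
  unfold IsCovariantlyConstant
  have key : ∀ n : ℕ, cM n ((PowerSeries.X ^ 2 : PowerSeries K) • matDeriv E + A * E - E * A)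
      = ((n-1 : ℕ) : K) • cM (n-1) E
        + ∑ m ∈ Finset.range (n+1), (cM m A * cM (n-m) E - cM (n-m) E * cM m A) := by
    intro n
    rw [show cM n ((PowerSeries.X ^ 2 : PowerSeries K) • matDeriv E + A * E - E * A)
        = cM n ((PowerSeries.X ^ 2 : PowerSeries K) • matDeriv E) + cM n (A * E) - cM n (E * A) by
        funext i j; simp [cM]]
    rw [cM_X2_deriv, cM_mul, cM_reflect, Finset.sum_sub_distrib, add_sub_assoc]
  constructor
  · intro h n
    rw [← key n, h]
    funext i j; simp [cM]
  · intro h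
    funext i j
    apply PowerSeries.ext
    intro n
    have h' := (key n).trans (h n)
    have := congrFun (congrFun h' i) j
    simpa [cM] using this

end CovAux

noncomputable def solC {K : Type} [Field K] {r : ℕ} (A1 : Matrix (Fin r) (Fin r) K)
    (a : ℕ → Matrix (Fin r) (Fin r) K) (E0 : Matrix (Fin r) (Fin r) K) :
    ℕ → Matrix (Fin r) (Fin r) K
  | 0 => E0
  | (k+1) =>
    Function.invFun
      (fun X : Matrix (Fin r) (Fin r) K => A1 * X - X * A1 - (((-(k : ℤ) - 1) : ℤ) : K) • X)
      (-(∑ i ∈ Finset.range (k+1),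
          (a (i+2) * solC A1 a E0 (k-i) - solC A1 a E0 (k-i) * a (i+2))))
  decreasing_by all_goals omega

open CovAux

/-- Let `K` be a field of characteristic `0` and `A` a matrix over `K[[τ]]` with vanishing
constant term and non-resonant `τ`-coefficient `A¹` (i.e. `X ↦ A¹X − XA¹ − nX` is bijective
for every nonzero integer `n`). Then every `E⁰` commuting with `A¹` extends uniquely to a
covariantly constant matrix `E` with constant term `E⁰`. -/
theorem exists_unique_covariantly_constant_of_nonresonant
    {K : Type} [Field K] [CharZero K] (r : ℕ) (hr : 1 ≤ r)
    (A : Matrix (Fin r) (Fin r) (PowerSeries K)) (hA0 : constTerm A = 0)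
    (A1 : Matrix (Fin r) (Fin r) K)
    (hA1 : A1 = fun i j => PowerSeries.coeff 1 (A i j))
    (hres : ∀ n : ℤ, n ≠ 0 →
      Function.Bijective (fun X : Matrix (Fin r) (Fin r) K => A1 * X - X * A1 - (n : K) • X))
    (E0 : Matrix (Fin r) (Fin r) K) (hE0 : A1 * E0 = E0 * A1) :
    ∃! E : Matrix (Fin r) (Fin r) (PowerSeries K),
      IsCovariantlyConstant A E ∧ constTerm E = E0 := by
  have ha0 : cM 0 A = (0 : Matrix (Fin r) (Fin r) K) := by
    funext i j
    have := congrFun (congrFun hA0 i) j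
    simpa [cM, constTerm, PowerSeries.coeff_zero_eq_constantCoeff] using this
  have ha1 : cM 1 A = A1 := by rw [hA1]; rfl
  set a : ℕ → Matrix (Fin r) (Fin r) K := fun m => cM m A with ha
  set e : ℕ → Matrix (Fin r) (Fin r) K := solC A1 a E0 with he
  have he0 : e 0 = E0 := by rw [he, solC]
  have hcast : ∀ k : ℕ, (((-(k : ℤ) - 1) : ℤ) : K) = -((k+1 : ℕ) : K) := by
    intro k; push_cast; ring
  have claim0 : ∀ k : ℕ,
      A1 * e (k+1) - e (k+1) * A1 + ((k+1 : ℕ) : K) • e (k+1)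
        = -(∑ i ∈ Finset.range (k+1), (a (i+2) * e (k-i) - e (k-i) * a (i+2))) := by
    intro k
    have hb := hres (-(k : ℤ) - 1) (by omega)
    have hri := Function.rightInverse_invFun hb.surjective
    have h1 : A1 * e (k+1) - e (k+1) * A1 - (((-(k : ℤ) - 1) : ℤ) : K) • e (k+1)
        = -(∑ i ∈ Finset.range (k+1), (a (i+2) * e (k-i) - e (k-i) * a (i+2))) := by
      rw [he, solC]
      exact hri _
    rw [hcast k, neg_smul, sub_neg_eq_add] at h1
    exact h1
  -- main characterization
  have main : ∀ E : Matrix (Fin r) (Fin r) (PowerSeries K),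
      (IsCovariantlyConstant A E ∧ constTerm E = E0) ↔ ∀ n, cM n E = e n := by
    intro E
    constructor
    · rintro ⟨hicc, hct⟩
      rw [icc_iff] at hicc
      have h0 : cM 0 E = E0 := by
        funext i j
        have := congrFun (congrFun hct i) j
        simpa [cM, constTerm, PowerSeries.coeff_zero_eq_constantCoeff] using this
      intro n
      induction n using Nat.strong_induction_on with
      | _ n IH =>
        match n with
        | 0 => rw [h0, he0]
        | (k+1) =>
          have heq := hicc (k+2)
          rw [Finset.sum_range_succ', Finset.sum_range_succ'] at heq
          simp only [zero_add, show (k+2-1 : ℕ) = k+1 from by omega,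
            show (k+2-0 : ℕ) = k+2 from by omega] at heq
          rw [show cM 0 A = (0:Matrix (Fin r) (Fin r) K) from ha0, ha1] at heq
          simp only [zero_mul, mul_zero, sub_zero, add_zero] at heq
          have hIH : ∀ i ∈ Finset.range (k+1),
              (cM (i+1+1) A * cM (k+2-(i+1+1)) E - cM (k+2-(i+1+1)) E * cM (i+1+1) A)
                = (a (i+2) * e (k-i) - e (k-i) * a (i+2)) := by
            intro i hi
            have h2 : (k+2-(i+1+1) : ℕ) = k - i := by omega
            rw [h2, IH (k-i) (by omega)]
          rw [Finset.sum_congr rfl hIH] at heq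
          set S := ∑ i ∈ Finset.range (k+1), (a (i+2) * e (k-i) - e (k-i) * a (i+2)) with hS
          set X := cM (k+1) E with hX
          -- heq : ((k+1:ℕ):K) • X + (S + (A1 * X - X * A1)) = 0
          have hL : A1 * X - X * A1 + ((k+1 : ℕ) : K) • X = -S := by
            refine eq_neg_of_add_eq_zero_left ?_
            rw [← heq]; abel
          have hinj := (hres (-(k : ℤ) - 1) (by omega)).injective
          have hfin : A1 * X - X * A1 - (((-(k : ℤ) - 1) : ℤ) : K) • X
              = A1 * e (k+1) - e (k+1) * A1 - (((-(k : ℤ) - 1) : ℤ) : K) • e (k+1) := by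
            rw [hcast k, neg_smul, sub_neg_eq_add, neg_smul, sub_neg_eq_add, hL, claim0 k]
          exact hinj hfin
    · intro hc
      have hct : constTerm E = E0 := by
        funext i j
        have := congrFun (congrFun (hc 0) i) j
        rw [he0] at this
        simpa [cM, constTerm, PowerSeries.coeff_zero_eq_constantCoeff] using this
      refine ⟨?_, hct⟩
      rw [icc_iff]
      intro n
      match n with
      | 0 =>
        simp only [zero_add, Nat.zero_sub, Nat.cast_zero, zero_smul, Finset.sum_range_one,
          Nat.sub_zero, ha0]
        simp
      | 1 =>
        rw [Finset.sum_range_succ, Finset.sum_range_one]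
        simp only [Nat.sub_self, Nat.cast_zero, zero_smul, Nat.sub_zero]
        rw [show cM 0 A = (0:Matrix (Fin r) (Fin r) K) from ha0, ha1, hc 0, he0]
        simp [hE0]
      | (k+2) =>
        rw [Finset.sum_range_succ', Finset.sum_range_succ']
        simp only [zero_add, show (k+2-1 : ℕ) = k+1 from by omega,
          show (k+2-0 : ℕ) = k+2 from by omega]
        rw [show cM 0 A = (0:Matrix (Fin r) (Fin r) K) from ha0, ha1]
        simp only [zero_mul, mul_zero, sub_zero, add_zero, hc]
        have hsc : ∀ i ∈ Finset.range (k+1),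
            (cM (i+1+1) A * e (k+2-(i+1+1)) - e (k+2-(i+1+1)) * cM (i+1+1) A)
              = (a (i+2) * e (k-i) - e (k-i) * a (i+2)) := by
          intro i hi
          have h2 : (k+2-(i+1+1) : ℕ) = k - i := by omega
          rw [h2]
        rw [Finset.sum_congr rfl hsc]
        set S := ∑ i ∈ Finset.range (k+1), (a (i+2) * e (k-i) - e (k-i) * a (i+2)) with hS
        have h3 := claim0 k
        have h4 : S = -(A1 * e (k+1) - e (k+1) * A1 + ((k+1 : ℕ) : K) • e (k+1)) := by
          rw [h3, neg_neg]
        rw [h4]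
        abel
  -- conclusion
  refine ⟨fun i j => PowerSeries.mk (fun n => e n i j), ?_, ?_⟩
  · apply (main _).mpr
    intro n
    funext i j
    simp [cM, PowerSeries.coeff_mk]
  · intro E' hE'
    have h1 := (main E').mp hE'
    funext i j
    apply PowerSeries.ext
    intro n
    have := congrFun (congrFun (h1 n) i) j
    simpa [cM, PowerSeries.coeff_mk] using this
end

section
/- Let K be a field of characteristic 0, r ≥ 1, and A an r×r matrix over K[[τ]] with vanishing constant term; write A¹ for the coefficient of τ in A, and assume that for every nonzero integer n, the K-linear map X ↦ A¹X − XA¹ − n·X on r×r matrices over K is bijective. Let N ≥ 1 and let F be an r×r matrix over K[[τ]] satisfying τ²·(dF/dτ) − N·τ·F + A·F − F·A = 0. Then τ^N divides F, i.e., the coefficient matrices of τ^k in F vanish for all k < N. (Equivalently: any covariantly constant endomorphism of the connection τ²d/dτ + A over the Laurent series field K((τ)) in fact has entries in K[[τ]].) -/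
/-- Let `K` be a field of characteristic `0` and `A` a matrix over `K[[τ]]` with vanishing
constant term, whose `τ`-coefficient `A¹` is non-resonant. If `N ≥ 1` and `F` satisfies
`τ²·(dF/dτ) − N·τ·F + A·F − F·A = 0`, then `τ^N` divides `F`: the coefficient of `τ^k` in `F`
vanishes for all `k < N`. (Equivalently, covariantly constant endomorphisms over `K((τ))`
have entries in `K[[τ]]`.) -/
theorem covariantly_constant_regular
    {K : Type} [Field K] [CharZero K] (r : ℕ) (hr : 1 ≤ r)
    (A : Matrix (Fin r) (Fin r) (PowerSeries K)) (hA0 : constTerm A = 0)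
    (A1 : Matrix (Fin r) (Fin r) K)
    (hA1 : A1 = fun i j => PowerSeries.coeff 1 (A i j))
    (hres : ∀ n : ℤ, n ≠ 0 →
      Function.Bijective (fun X : Matrix (Fin r) (Fin r) K => A1 * X - X * A1 - (n : K) • X))
    (N : ℕ) (hN : 1 ≤ N)
    (F : Matrix (Fin r) (Fin r) (PowerSeries K))
    (hF : (PowerSeries.X ^ 2 : PowerSeries K) • matDeriv F
        - ((N : PowerSeries K) * PowerSeries.X) • F + A * F - F * A = 0) :
    ∀ k < N, ∀ i j, PowerSeries.coeff k (F i j) = 0 := by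
  intro k
  induction k using Nat.strong_induction_on with
  | _ k IH =>
  intro hk
  -- the matrix of k-th coefficients of F
  set Fk : Matrix (Fin r) (Fin r) K := fun i j => PowerSeries.coeff k (F i j) with hFkdef
  have hA0' : ∀ i l, PowerSeries.coeff 0 (A i l) = 0 := by
    intro i l
    have := Matrix.ext_iff.mpr hA0 i l
    simpa [constTerm] using this
  have hmat : A1 * Fk - Fk * A1 - (((N : ℤ) - (k : ℤ) : ℤ) : K) • Fk = 0 := by
    ext i j
    have h0 := Matrix.ext_iff.mpr hF i j
    have h1 := congrArg (PowerSeries.coeff (k + 1)) h0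
    simp only [Matrix.sub_apply, Matrix.add_apply, Matrix.smul_apply, Matrix.zero_apply,
      map_sub, map_add, map_zero, smul_eq_mul] at h1
    -- first term
    have ha : PowerSeries.coeff (k + 1) ((PowerSeries.X ^ 2 : PowerSeries K) * matDeriv F i j)
        = (k : K) * Fk i j := by
      rw [PowerSeries.coeff_X_pow_mul']
      rcases Nat.eq_zero_or_pos k with rfl | hkpos
      · simp
      · rw [if_pos (by omega)]
        have : k + 1 - 2 = k - 1 := by omega
        rw [this]
        show PowerSeries.coeff (k - 1) (PowerSeries.derivative K (F i j)) = _
        rw [PowerSeries.coeff_derivative]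
        have h2 : k - 1 + 1 = k := by omega
        rw [h2, Nat.cast_sub (by omega : 1 ≤ k)]
        push_cast
        ring
    -- second term
    have hb : PowerSeries.coeff (k + 1) (((N : PowerSeries K) * PowerSeries.X) * F i j)
        = (N : K) * Fk i j := by
      rw [mul_assoc, ← map_natCast PowerSeries.C N, PowerSeries.coeff_C_mul,
        PowerSeries.coeff_succ_X_mul]
    -- product terms
    have hterm : ∀ l, PowerSeries.coeff (k + 1) (A i l * F l j) = A1 i l * Fk l j := by
      intro l
      rw [PowerSeries.coeff_mul, Finset.sum_eq_single (1, k)]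
      · simp [hA1, hFkdef]
      · rintro ⟨p, q⟩ hpq hne
        rw [Finset.HasAntidiagonal.mem_antidiagonal] at hpq
        have hne' : ¬(p = 1 ∧ q = k) := by
          rintro ⟨rfl, rfl⟩; exact hne rfl
        have : p = 0 ∨ q < k := by omega
        rcases this with rfl | hq
        · simp [hA0' i l]
        · rw [IH q hq (by omega) l j, mul_zero]
      · intro h
        exact absurd (Finset.HasAntidiagonal.mem_antidiagonal.mpr (by omega)) h
    have hterm' : ∀ l, PowerSeries.coeff (k + 1) (F i l * A l j) = Fk i l * A1 l j := by
      intro l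
      rw [PowerSeries.coeff_mul, Finset.sum_eq_single (k, 1)]
      · simp [hA1, hFkdef]
      · rintro ⟨p, q⟩ hpq hne
        rw [Finset.HasAntidiagonal.mem_antidiagonal] at hpq
        have hne' : ¬(p = k ∧ q = 1) := by
          rintro ⟨rfl, rfl⟩; exact hne rfl
        have : q = 0 ∨ p < k := by omega
        rcases this with rfl | hp
        · simp [hA0' l j]
        · rw [IH p hp (by omega) i l, zero_mul]
      · intro h
        exact absurd (Finset.HasAntidiagonal.mem_antidiagonal.mpr (by omega)) h
    have hc : PowerSeries.coeff (k + 1) ((A * F) i j) = (A1 * Fk) i j := by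
      rw [Matrix.mul_apply, map_sum, Matrix.mul_apply]
      exact Finset.sum_congr rfl fun l _ => hterm l
    have hd : PowerSeries.coeff (k + 1) ((F * A) i j) = (Fk * A1) i j := by
      rw [Matrix.mul_apply, map_sum, Matrix.mul_apply]
      exact Finset.sum_congr rfl fun l _ => hterm' l
    rw [ha, hb, hc, hd] at h1
    simp only [Matrix.sub_apply, Matrix.smul_apply, Matrix.zero_apply, smul_eq_mul]
    push_cast
    linear_combination h1
  have hn : ((N : ℤ) - (k : ℤ)) ≠ 0 := by omega
  have hFk0 : Fk = 0 := by
    apply (hres ((N : ℤ) - (k : ℤ)) hn).injective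
    simp only
    rw [hmat]
    simp
  intro i j
  exact congrFun (congrFun hFk0 i) j
end

section
/- Let A be the 2×2 matrix over ℚ[[τ]] with entries A₁₁ = −τ, A₁₂ = τ², A₂₁ = 0, A₂₂ = 0. Then there is no 2×2 matrix E over ℚ[[τ]] that is covariantly constant for A and whose constant term is the diagonal matrix diag(1, 0). -/
/-- For the connection `τ²d/dτ + [[−τ, τ²], [0, 0]]` over `ℚ[[τ]]`, the idempotent
`diag(1, 0)` does not admit a covariantly constant extension. -/
theorem no_covariantly_constant_extension :
    ¬ ∃ E : Matrix (Fin 2) (Fin 2) (PowerSeries ℚ),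
      IsCovariantlyConstant
        !![-PowerSeries.X, PowerSeries.X ^ 2; 0, 0] E ∧
      constTerm E = !![(1 : ℚ), 0; 0, 0] := by
  rintro ⟨E, hcov, hct⟩
  have ha : PowerSeries.constantCoeff (E 0 0) = 1 := congrFun (congrFun hct 0) 0
  have hd : PowerSeries.constantCoeff (E 1 1) = 0 := congrFun (congrFun hct 1) 1
  have h := congrFun (congrFun hcov 0) 1
  simp only [Matrix.add_apply, Matrix.sub_apply, Matrix.smul_apply, Matrix.mul_apply,
    Fin.sum_univ_two, matDeriv, Matrix.zero_apply, Matrix.cons_val', Matrix.cons_val_zero,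
    Matrix.cons_val_one, Matrix.head_cons, Matrix.empty_val', Matrix.cons_val_fin_one,
    Matrix.head_fin_const, smul_eq_mul] at h
  have h2 := congrArg (PowerSeries.coeff (R := ℚ) 2) h
  rw [show ((PowerSeries.X : PowerSeries ℚ)) = PowerSeries.X ^ 1 by ring] at h2
  simp [PowerSeries.coeff_X_pow_mul', PowerSeries.coeff_mul_X_pow', PowerSeries.coeff_derivative,
    neg_mul] at h2
  rw [ha, hd] at h2
  norm_num at h2
end

section
/- Let K be an algebraically closed field of characteristic 0, r ≥ 1, and A any r×r matrix over K[[τ]]. Then the set of r×r matrices E over K[[τ]] satisfying τ²·(dE/dτ) + A·E − E·A = 0 is a K-linear subspace of the space of matrices over K[[τ]], and this subspace is finite-dimensional over K. -/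
set_option linter.unusedSectionVars false
set_option linter.unnecessarySimpa false
set_option synthInstance.maxHeartbeats 400000
set_option maxHeartbeats 1000000

open PowerSeries
open scoped Classical

section Aux


variable {K : Type} [Field K] [CharZero K]

/-- If `f g' = g f'` and `f` has nonzero constant term, then every coefficient of `g`
is `c` times that of `f`, where `c = g₀/f₀`. -/
lemma coeff_prop (f g : PowerSeries K) (hf : constantCoeff f ≠ 0)
    (h : f * derivative K g = g * derivative K f) (k : ℕ) :
    coeff k g = (constantCoeff g / constantCoeff f) * coeff k f := by
  set c := constantCoeff g / constantCoeff f with hc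
  induction k using Nat.strong_induction_on with
  | _ k IH =>
    match k with
    | 0 =>
      simp only [coeff_zero_eq_constantCoeff]
      rw [hc, div_mul_cancel₀ _ hf]
    | (m+1) =>
      have h' := congrArg (coeff m) h
      rw [coeff_mul, coeff_mul] at h'
      rw [Finset.Nat.sum_antidiagonal_eq_sum_range_succ_mk,
        Finset.Nat.sum_antidiagonal_eq_sum_range_succ_mk] at h'
      simp only [coeff_derivative] at h'
      rw [Finset.sum_range_succ', Finset.sum_range_succ'] at h'
      have tail : ∑ i ∈ Finset.range m,
            coeff (i+1) f * (coeff (m - (i+1) + 1) g * ((m - (i+1) : ℕ) + 1 : K))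
          = ∑ i ∈ Finset.range m,
            coeff (i+1) g * (coeff (m - (i+1) + 1) f * ((m - (i+1) : ℕ) + 1 : K)) := by
        refine Finset.sum_congr rfl (fun i hi => ?_)
        have hi' : i < m := Finset.mem_range.mp hi
        rw [IH (i+1) (by omega), IH (m - (i+1) + 1) (by omega)]
        ring
      rw [tail] at h'
      have head : coeff 0 f * (coeff (m - 0 + 1) g * ((m - 0 : ℕ) + 1 : K))
          = coeff 0 g * (coeff (m - 0 + 1) f * ((m - 0 : ℕ) + 1 : K)) := by
        exact add_left_cancel h'
      simp only [Nat.sub_zero, coeff_zero_eq_constantCoeff] at head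
      have hm1 : ((m : K) + 1) ≠ 0 := by
        have h2 : ((m+1 : ℕ) : K) ≠ 0 := Nat.cast_ne_zero.mpr (Nat.succ_ne_zero m)
        push_cast at h2; exact h2
      have : constantCoeff f * coeff (m+1) g = constantCoeff g * coeff (m+1) f := by
        have := head
        field_simp at this ⊢
        ring_nf at this ⊢
        linear_combination this
      rw [hc, div_mul_eq_mul_div, eq_div_iff hf]
      linear_combination this

/-- f g' = g f' with f unit constant coeff implies g = C c * f. -/
lemma prop_of_unit (f g : PowerSeries K) (hf : constantCoeff f ≠ 0)
    (h : f * derivative K g = g * derivative K f) :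
    g = C (constantCoeff g / constantCoeff f) * f := by
  ext k
  rw [coeff_C_mul]
  exact coeff_prop f g hf h k

lemma wronskian_aux : ∀ (n : ℕ) (f g : PowerSeries K), ¬ ((X : PowerSeries K)^n ∣ f) →
    f * derivative K g = g * derivative K f → ∃ c : K, g = C c * f := by
  intro n
  induction n with
  | zero => intro f g hdvd _; exact absurd (by simpa using (one_dvd f)) hdvd
  | succ n IH =>
    intro f g hdvd h
    have hf0 : f ≠ 0 := by rintro rfl; exact hdvd (dvd_zero _)
    by_cases hcf : constantCoeff f ≠ 0
    · exact ⟨_, prop_of_unit f g hcf h⟩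
    · push_neg at hcf
      by_cases hcg : constantCoeff g = 0
      · -- both divisible by X
        obtain ⟨f₁, rfl⟩ := (X_dvd_iff (φ := f)).mpr hcf
        obtain ⟨g₁, rfl⟩ := (X_dvd_iff (φ := g)).mpr hcg
        have hd1 : ¬ ((X : PowerSeries K)^n ∣ f₁) := by
          intro ⟨u, hu⟩
          exact hdvd ⟨u, by rw [hu]; ring⟩
        have hden : f₁ * derivative K g₁ = g₁ * derivative K f₁ := by
          have hX2 : (X : PowerSeries K)^2 ≠ 0 := pow_ne_zero _ X_ne_zero
          apply mul_left_cancel₀ hX2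
          have hD : ∀ p : PowerSeries K, derivative K (X * p) = p + X * derivative K p := by
            intro p
            rw [Derivation.leibniz]
            simp [smul_eq_mul]
            ring
          rw [hD, hD] at h
          have := h
          ring_nf at this ⊢
          linear_combination this
        obtain ⟨c, hc⟩ := IH f₁ g₁ hd1 hden
        exact ⟨c, by rw [hc]; ring⟩
      · -- g is a unit, f = (f₀/g₀) g = 0, contradiction
        exfalso
        have := prop_of_unit g f hcg h.symm
        rw [hcf] at this
        simp at this
        exact hf0 this

lemma wronskian_eq (f g : PowerSeries K) (hf : f ≠ 0)
    (h : f * derivative K g = g * derivative K f) : ∃ c : K, g = C c * f := by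
  obtain ⟨k, hk⟩ : ∃ k, coeff k f ≠ 0 := by
    by_contra hall; push_neg at hall
    exact hf (PowerSeries.ext fun n => by simpa using hall n)
  refine wronskian_aux (k+1) f g ?_ h
  intro hd
  exact hk ((X_pow_dvd_iff.mp hd) k (Nat.lt_succ_self k))

variable {K : Type} [Field K] [CharZero K] {r : ℕ}

local notation "R" => PowerSeries K
local notation "M" => Matrix (Fin r) (Fin r) (PowerSeries K)


lemma matDeriv_add (E F : Matrix (Fin r) (Fin r) (PowerSeries K)) :
    matDeriv (E + F) = matDeriv E + matDeriv F := by
  funext a b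
  simp [matDeriv]

lemma matDeriv_zero : matDeriv (0 : M) = 0 := by
  funext i j; simp [matDeriv]

lemma matDeriv_sum {ι : Type} (s : Finset ι) (E : ι → M) :
    matDeriv (∑ i ∈ s, E i) = ∑ i ∈ s, matDeriv (E i) := by
  funext a b
  simp [matDeriv, Matrix.sum_apply]

lemma matDeriv_smul (f : R) (E : M) :
    matDeriv (f • E) = derivative K f • E + f • matDeriv E := by
  funext a b
  simp only [matDeriv, Matrix.add_apply, Matrix.smul_apply, smul_eq_mul]
  rw [Derivation.leibniz]
  simp [smul_eq_mul]
  ring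

lemma matDeriv_smulK (c : K) (E : M) : matDeriv (c • E) = c • matDeriv E := by
  funext a b
  simp only [matDeriv, Matrix.smul_apply]
  rw [Derivation.map_smul]

lemma smul_matrix_eq_zero (f : R) (W : M) (hf : f ≠ 0) (h : f • W = 0) : W = 0 := by
  funext a b
  have := congrFun (congrFun h a) b
  simp only [Matrix.smul_apply, smul_eq_mul, Matrix.zero_apply] at this ⊢
  rcases mul_eq_zero.mp this with h' | h'
  · exact absurd h' hf
  · exact h'

lemma core (A : M) {ι : Type} [Fintype ι] [DecidableEq ι] (v : ι → M)
    (hv : ∀ i, (X:R)^2 • matDeriv (v i) = v i * A - A * v i) :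
    ∀ (n : ℕ) (g : ι → R), (Finset.univ.filter (fun i => g i ≠ 0)).card ≤ n →
      ∑ i, g i • v i = 0 → (∃ j, g j ≠ 0) →
      ∃ c : ι → K, (∑ i, c i • v i = 0) ∧ ∃ j, c j ≠ 0 := by
  intro n
  induction n with
  | zero =>
    intro g hcard _ ⟨j, hj⟩
    exfalso
    have : j ∈ Finset.univ.filter (fun i => g i ≠ 0) := by simp [hj]
    have := Finset.card_pos.mpr ⟨j, this⟩
    omega
  | succ n IH =>
    intro g hcard hrel ⟨j, hj⟩
    -- derived relation with δ(g i) = X^2 * D(g i)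
    set δ : ι → R := fun i => (X:R)^2 * derivative K (g i) with hδ
    have hDrel : ∑ i, δ i • v i = 0 := by
      have h0 : matDeriv (∑ i, g i • v i) = 0 := by rw [hrel, matDeriv_zero]
      rw [matDeriv_sum] at h0
      have h1 : ∑ i, (derivative K (g i) • v i + g i • matDeriv (v i)) = 0 := by
        rw [← h0]; exact Finset.sum_congr rfl fun i _ => (matDeriv_smul _ _).symm
      have h2 : (X:R)^2 • (∑ i, (derivative K (g i) • v i + g i • matDeriv (v i))) = 0 := by
        rw [h1, smul_zero]
      rw [Finset.smul_sum] at h2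
      have h3 : ∑ i, (δ i • v i + g i • (v i * A - A * v i)) = 0 := by
        rw [← h2]
        refine Finset.sum_congr rfl fun i _ => ?_
        rw [smul_add, ← hv i, hδ]
        simp only [mul_smul]
        rw [smul_comm ((X:R)^2) (g i)]
      rw [Finset.sum_add_distrib] at h3
      have h4 : ∑ i, g i • (v i * A - A * v i) = 0 := by
        have : ∑ i, g i • (v i * A - A * v i)
            = (∑ i, g i • v i) * A - A * (∑ i, g i • v i) := by
          rw [Finset.sum_mul, Finset.mul_sum, ← Finset.sum_sub_distrib]
          refine Finset.sum_congr rfl fun i _ => ?_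
          rw [smul_sub, Matrix.smul_mul, Matrix.mul_smul]
        rw [this, hrel]
        simp
      rw [h4, add_zero] at h3
      exact h3
    set h : ι → R := fun i => g j * δ i - δ j * g i with hh
    have hsum : ∑ i, h i • v i = 0 := by
      have : ∑ i, h i • v i = g j • (∑ i, δ i • v i) - δ j • (∑ i, g i • v i) := by
        rw [Finset.smul_sum, Finset.smul_sum, ← Finset.sum_sub_distrib]
        refine Finset.sum_congr rfl fun i _ => ?_
        rw [hh]
        simp only [sub_smul, mul_smul]
      rw [this, hDrel, hrel, smul_zero, smul_zero, sub_zero]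
    by_cases hex : ∃ i, h i ≠ 0
    · refine IH h ?_ hsum hex
      have hsubset : Finset.univ.filter (fun i => h i ≠ 0)
          ⊆ (Finset.univ.filter (fun i => g i ≠ 0)).erase j := by
        intro i hi
        simp only [Finset.mem_filter, Finset.mem_univ, true_and] at hi
        rw [Finset.mem_erase]
        constructor
        · rintro rfl; exact hi (by rw [hh]; ring)
        · simp only [Finset.mem_filter, Finset.mem_univ, true_and]
          intro hgi
          exact hi (by rw [hh, hδ]; simp [hgi])
      have hjmem : j ∈ Finset.univ.filter (fun i => g i ≠ 0) := by simp [hj]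
      have := Finset.card_le_card hsubset
      rw [Finset.card_erase_of_mem hjmem] at this
      omega
    · push_neg at hex
      -- g i = C (c i) * g j for all i
      have hprop : ∀ i, g j * derivative K (g i) = g i * derivative K (g j) := by
        intro i
        have := hex i
        rw [hh, sub_eq_zero, hδ] at this
        have hX2 : (X:R)^2 ≠ 0 := pow_ne_zero _ X_ne_zero
        apply mul_left_cancel₀ hX2
        ring_nf at this ⊢
        linear_combination this
      have hc : ∀ i, ∃ c : K, g i = C c * g j := fun i =>
        wronskian_eq (g j) (g i) hj (hprop i)
      choose c hcspec using hc
      refine ⟨c, ?_, ⟨j, ?_⟩⟩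
      · have : ∑ i, g i • v i = g j • ∑ i, c i • v i := by
          rw [Finset.smul_sum]
          refine Finset.sum_congr rfl fun i _ => ?_
          rw [hcspec i, PowerSeries.C_eq_algebraMap, mul_smul, algebraMap_smul, smul_comm]
        rw [hrel] at this
        exact (smul_matrix_eq_zero _ _ hj this.symm)
      · intro hcj
        have := hcspec j
        rw [hcj] at this
        simp at this
        exact hj this

end Aux

/-- Over an algebraically closed field `K` of characteristic `0`, for any matrix `A` over
`K[[τ]]`, the covariantly constant matrices `E` (solutions of `τ²E' + AE − EA = 0`) form a
`K`-linear subspace of the matrices over `K[[τ]]`, and this subspace is finite-dimensional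
over `K`. -/
theorem covariantly_constant_finiteDimensional
    {K : Type} [Field K] [CharZero K] [IsAlgClosed K] (r : ℕ) (hr : 1 ≤ r)
    (A : Matrix (Fin r) (Fin r) (PowerSeries K)) :
    ∃ S : Submodule K (Matrix (Fin r) (Fin r) (PowerSeries K)),
      (∀ E, E ∈ S ↔ IsCovariantlyConstant A E) ∧ FiniteDimensional K S := by
  let Φ : Matrix (Fin r) (Fin r) (PowerSeries K) →ₗ[K] Matrix (Fin r) (Fin r) (PowerSeries K) :=
    { toFun := fun E => (X : PowerSeries K)^2 • matDeriv E + A * E - E * A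
      map_add' := fun E F => by
        rw [matDeriv_add]
        simp only [smul_add, Matrix.mul_add, Matrix.add_mul]
        abel
      map_smul' := fun c E => by
        rw [matDeriv_smulK]
        simp only [RingHom.id_apply, smul_sub, smul_add, mul_smul_comm, smul_mul_assoc]
        rw [smul_comm ((X : PowerSeries K)^2) c] }
  refine ⟨LinearMap.ker Φ, fun E => by rw [LinearMap.mem_ker]; exact Iff.rfl, ?_⟩
  have hrank : Module.rank K (LinearMap.ker Φ) ≤ (r * r : ℕ) := by
    apply rank_le
    intro s hs
    set v : s → Matrix (Fin r) (Fin r) (PowerSeries K) := fun i => ((i : LinearMap.ker Φ) : Matrix (Fin r) (Fin r) (PowerSeries K)) with hv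
    have hsol : ∀ i : s, (X : PowerSeries K)^2 • matDeriv (v i) = v i * A - A * v i := by
      intro i
      have hm : Φ (v i) = 0 := (i : LinearMap.ker Φ).2
      have hm' : (X : PowerSeries K)^2 • matDeriv (v i) + A * v i - v i * A = 0 := hm
      rw [sub_eq_zero] at hm'
      rw [eq_sub_of_add_eq hm']
    have hK : LinearIndependent K v := hs.map' (LinearMap.ker Φ).subtype
      (Submodule.ker_subtype _)
    have hR : LinearIndependent (PowerSeries K) v := by
      rw [Fintype.linearIndependent_iff]
      by_contra hcon
      push_neg at hcon
      obtain ⟨g, hg0, i0, hi0⟩ := hcon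
      obtain ⟨c, hc0, jj, hjj⟩ := core A v hsol (Fintype.card s) g
        (le_trans (Finset.card_le_card (Finset.subset_univ _)) (by simp)) hg0 ⟨i0, hi0⟩
      rw [Fintype.linearIndependent_iff] at hK
      exact hjj (hK c hc0 jj)
    have hcard := hR.fintype_card_le_finrank
    rw [Module.finrank_matrix] at hcard
    simpa using hcard
  have : Module.rank K (LinearMap.ker Φ) < Cardinal.aleph0 :=
    lt_of_le_of_lt hrank (Cardinal.nat_lt_aleph0 _)
  exact Module.rank_lt_aleph0_iff.mp this
end

section
/- Let K be an algebraically closed field of characteristic 0, L a field extension of K (via a ring homomorphism K → L), r ≥ 1, and A an r×r matrix over K[[τ]]. Let E₁⁰, …, E_s⁰ be r×r matrices over K with E₁⁰ + ⋯ + E_s⁰ = 1, E_i⁰E_j⁰ = E_i⁰ if i = j and 0 if i ≠ j, and each E_i⁰ commuting with the constant term A(0). Suppose that over L[[τ]] there exist matrices Ẽ₁, …, Ẽ_s, each covariantly constant for the image of A in Mat(L[[τ]]), with Ẽ₁ + ⋯ + Ẽ_s = 1, Ẽ_iẼ_j = Ẽ_i if i = j and 0 if i ≠ j, and with the constant term of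 Ẽ_i equal to the image of E_i⁰. Then there exist matrices E₁, …, E_s over K[[τ]], each covariantly constant for A, with E₁ + ⋯ + E_s = 1, E_iE_j = E_i if i = j and 0 if i ≠ j, and with the constant term of E_i equal to E_i⁰. -/
namespace CCSD

variable {K : Type} [CommRing K] {r : ℕ} (A : Matrix (Fin r) (Fin r) (PowerSeries K))

lemma matDeriv_add (E F : Matrix (Fin r) (Fin r) (PowerSeries K)) :
    matDeriv (E + F) = matDeriv E + matDeriv F := by
  funext i j
  simp [matDeriv, Matrix.add_apply]

lemma matDeriv_neg (E : Matrix (Fin r) (Fin r) (PowerSeries K)) :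
    matDeriv (-E) = -(matDeriv E) := by
  funext i j
  simp [matDeriv, Matrix.neg_apply]

lemma matDeriv_one : matDeriv (1 : Matrix (Fin r) (Fin r) (PowerSeries K)) = 0 := by
  funext i j
  simp [matDeriv, Matrix.one_apply]
  split <;> simp

lemma matDeriv_zero : matDeriv (0 : Matrix (Fin r) (Fin r) (PowerSeries K)) = 0 := by
  funext i j
  simp [matDeriv]

lemma matDeriv_mul (E F : Matrix (Fin r) (Fin r) (PowerSeries K)) :
    matDeriv (E * F) = matDeriv E * F + E * matDeriv F := by
  funext i j
  simp only [matDeriv, Matrix.mul_apply, Matrix.add_apply, map_sum]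
  rw [← Finset.sum_add_distrib]
  congr 1; funext k
  rw [Derivation.leibniz]
  simp [smul_eq_mul]; ring

lemma matDeriv_smul (c : PowerSeries K) (E : Matrix (Fin r) (Fin r) (PowerSeries K)) :
    matDeriv (c • E) = (PowerSeries.derivative K c) • E + c • matDeriv E := by
  funext i j
  simp only [matDeriv, Matrix.smul_apply, Matrix.add_apply, smul_eq_mul]
  rw [Derivation.leibniz]
  simp [smul_eq_mul]; ring

end CCSD

namespace CCSD

variable {K : Type} [CommRing K] {r : ℕ} (A : Matrix (Fin r) (Fin r) (PowerSeries K))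

/-- The covariant derivative operator. -/
noncomputable def covD (E : Matrix (Fin r) (Fin r) (PowerSeries K)) :
    Matrix (Fin r) (Fin r) (PowerSeries K) :=
  (PowerSeries.X ^ 2 : PowerSeries K) • matDeriv E + A * E - E * A

lemma isCC_iff (E : Matrix (Fin r) (Fin r) (PowerSeries K)) :
    IsCovariantlyConstant A E ↔ covD A E = 0 := Iff.rfl

lemma covD_add (E F : Matrix (Fin r) (Fin r) (PowerSeries K)) :
    covD A (E + F) = covD A E + covD A F := by
  simp only [covD, matDeriv_add, smul_add, mul_add, add_mul]
  abel

lemma covD_neg (E : Matrix (Fin r) (Fin r) (PowerSeries K)) :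
    covD A (-E) = -(covD A E) := by
  simp only [covD, matDeriv_neg, smul_neg, mul_neg, neg_mul]
  abel

lemma covD_one : covD A (1 : Matrix (Fin r) (Fin r) (PowerSeries K)) = 0 := by
  simp [covD, matDeriv_one]

lemma covD_zero : covD A (0 : Matrix (Fin r) (Fin r) (PowerSeries K)) = 0 := by
  simp [covD, matDeriv_zero]

lemma covD_mul (E F : Matrix (Fin r) (Fin r) (PowerSeries K)) :
    covD A (E * F) = covD A E * F + E * covD A F := by
  simp only [covD, matDeriv_mul, smul_add, add_mul, mul_add, sub_mul, mul_sub,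
    smul_mul_assoc, mul_smul_comm, mul_assoc]
  abel

lemma covD_smul (c : PowerSeries K) (E : Matrix (Fin r) (Fin r) (PowerSeries K)) :
    covD A (c • E) = ((PowerSeries.X ^ 2 : PowerSeries K) * PowerSeries.derivative K c) • E
      + c • covD A E := by
  simp only [covD, matDeriv_smul, smul_add, mul_smul_comm, smul_mul_assoc, mul_smul, smul_sub]
  rw [smul_comm ((PowerSeries.X ^ 2 : PowerSeries K)) c]
  abel

/-- The subring of covariantly constant matrices. -/
noncomputable def flatSubring : Subring (Matrix (Fin r) (Fin r) (PowerSeries K)) where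
  carrier := {E | IsCovariantlyConstant A E}

  mul_mem' := by
    intro E F hE hF
    simp only [Set.mem_setOf_eq, isCC_iff] at *
    rw [covD_mul, hE, hF]
    simp
  one_mem' := covD_one A
  add_mem' := by
    intro E F hE hF
    simp only [Set.mem_setOf_eq, isCC_iff] at *
    rw [covD_add, hE, hF]; simp
  zero_mem' := covD_zero A
  neg_mem' := by
    intro E hE
    simp only [Set.mem_setOf_eq, isCC_iff] at *
    rw [covD_neg, hE]; simp

lemma flat_pow {E : Matrix (Fin r) (Fin r) (PowerSeries K)}
    (hE : IsCovariantlyConstant A E) (k : ℕ) : IsCovariantlyConstant A (E ^ k) :=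
  pow_mem (show E ∈ flatSubring A from hE) k

end CCSD
namespace CCSD
open PowerSeries

variable {K : Type} [Field K] [CharZero K]

lemma exists_order {a : PowerSeries K} (ha : a ≠ 0) :
    ∃ w, coeff w a ≠ 0 ∧ ∀ i < w, coeff i a = 0 := by
  classical
  have h : ∃ n, coeff n a ≠ 0 := by
    by_contra hc
    push_neg at hc
    exact ha (PowerSeries.ext fun n => by simp [hc n])
  refine ⟨Nat.find h, Nat.find_spec h, fun i hi => ?_⟩
  by_contra hne
  exact absurd (Nat.find_min h hi) (by simp [hne])

lemma le_order_of_wronskian {a b : PowerSeries K} {w m : ℕ}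
    (hw : coeff w a ≠ 0) (hwmin : ∀ i < w, coeff i a = 0)
    (hm : coeff m b ≠ 0) (hmmin : ∀ j < m, coeff j b = 0)
    (h : derivative K a * b = a * derivative K b) : m ≤ w := by
  by_contra hwm
  push_neg at hwm
  obtain ⟨m', rfl⟩ : ∃ m', m = m' + 1 := ⟨m - 1, by omega⟩
  have hR : coeff (w + m') (a * derivative K b) =
      ((m' + 1 : ℕ) : K) * (coeff w a * coeff (m' + 1) b) := by
    rw [PowerSeries.coeff_mul]
    rw [Finset.sum_eq_single (w, m')]
    · rw [PowerSeries.coeff_derivative]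
      push_cast; ring
    · rintro ⟨i, j⟩ hmem hne
      rw [Finset.HasAntidiagonal.mem_antidiagonal] at hmem
      have hmem' : i + j = w + m' := hmem
      have hine : i ≠ w := by
        intro hiw
        subst hiw
        have hj : j = m' := by omega
        subst hj
        exact hne rfl
      rcases lt_or_gt_of_ne hine with hi | hi
      · rw [hwmin i hi, zero_mul]
      · rw [PowerSeries.coeff_derivative, hmmin (j + 1) (by omega), zero_mul, mul_zero]
    · intro hmem
      exact absurd (by simp : (w, m') ∈ Finset.HasAntidiagonal.antidiagonal (w + m')) hmem
  have hL : coeff (w + m') (derivative K a * b) =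
      ((w : ℕ) : K) * (coeff w a * coeff (m' + 1) b) := by
    rw [PowerSeries.coeff_mul]
    rcases Nat.eq_zero_or_pos w with hw0 | hwpos
    · subst hw0
      rw [Finset.sum_eq_zero, Nat.cast_zero, zero_mul]
      rintro ⟨i, j⟩ hmem
      rw [Finset.HasAntidiagonal.mem_antidiagonal] at hmem
      have hmem' : i + j = 0 + m' := hmem
      rw [hmmin j (by omega), mul_zero]
    · obtain ⟨w', hw'⟩ : ∃ w', w = w' + 1 := ⟨w - 1, by omega⟩
      subst hw'
      rw [Finset.sum_eq_single (w', m' + 1)]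
      · rw [PowerSeries.coeff_derivative]
        push_cast; ring
      · rintro ⟨i, j⟩ hmem hne
        rw [Finset.HasAntidiagonal.mem_antidiagonal] at hmem
        have hmem' : i + j = w' + 1 + m' := hmem
        have hine : i ≠ w' := by
          intro hiw
          subst hiw
          have hj : j = m' + 1 := by omega
          subst hj
          exact hne rfl
        rcases lt_or_gt_of_ne hine with hi | hi
        · rw [PowerSeries.coeff_derivative, hwmin (i + 1) (by omega), zero_mul, zero_mul]
        · rw [hmmin j (by omega), mul_zero]
      · intro hmem
        exact absurd (by rw [Finset.HasAntidiagonal.mem_antidiagonal]; omega :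
          (w', m' + 1) ∈ Finset.HasAntidiagonal.antidiagonal (w' + 1 + m')) hmem
  rw [h, hR] at hL
  have hc : coeff w a * coeff (m' + 1) b ≠ 0 := mul_ne_zero hw hm
  have hcast : ((m' + 1 : ℕ) : K) = ((w : ℕ) : K) := mul_right_cancel₀ hc hL
  have : m' + 1 = w := Nat.cast_injective hcast
  omega

lemma eq_C_mul_of_wronskian {a b : PowerSeries K} (hb : b ≠ 0)
    (h : derivative K a * b = a * derivative K b) :
    ∃ lam : K, a = PowerSeries.C lam * b := by
  obtain ⟨m, hm, hmmin⟩ := exists_order hb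
  rcases eq_or_ne a 0 with rfl | ha
  · exact ⟨0, by simp⟩
  obtain ⟨w, hw, hwmin⟩ := exists_order ha
  have h' : derivative K b * a = b * derivative K a := by
    rw [mul_comm, ← h, mul_comm]
  have hmw : m ≤ w := le_order_of_wronskian hw hwmin hm hmmin h
  have hwm : w ≤ m := le_order_of_wronskian hm hmmin hw hwmin h'
  have hwem : w = m := le_antisymm hwm hmw
  subst hwem
  set lam := coeff w a * (coeff w b)⁻¹ with hlam
  refine ⟨lam, ?_⟩
  set d := a - PowerSeries.C lam * b with hd
  by_contra hne
  have hdne : d ≠ 0 := by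
    intro h0
    rw [hd, sub_eq_zero] at h0
    exact hne h0
  have hderC : derivative K (PowerSeries.C lam * b) = PowerSeries.C lam * derivative K b := by
    rw [Derivation.leibniz]
    simp [smul_eq_mul, mul_comm]
  have hdw : derivative K d * b = d * derivative K b := by
    rw [hd, map_sub, hderC, sub_mul, sub_mul, h]
    ring
  have hdcoeff : ∀ i ≤ w, coeff i d = 0 := by
    intro i hi
    rcases Nat.lt_or_ge i w with hilt | hige
    · simp [hd, PowerSeries.coeff_C_mul, hwmin i hilt, hmmin i hilt]
    · have hiw : i = w := by omega
      subst hiw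
      simp only [hd, map_sub, PowerSeries.coeff_C_mul, hlam]
      field_simp
      simp
  obtain ⟨wd, hwd, hwdmin⟩ := exists_order hdne
  have h2 : derivative K b * d = b * derivative K d := by
    rw [mul_comm, ← hdw, mul_comm]
  have h4 : wd ≤ w := le_order_of_wronskian hm hmmin hwd hwdmin h2
  exact hwd (hdcoeff wd h4)


variable {K : Type} [Field K] [CharZero K] {r : ℕ}

lemma covD_sum (A : Matrix (Fin r) (Fin r) (PowerSeries K)) {ι : Type*} (s : Finset ι)
    (f : ι → Matrix (Fin r) (Fin r) (PowerSeries K)) :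
    covD A (∑ i ∈ s, f i) = ∑ i ∈ s, covD A (f i) := by
  induction s using Finset.cons_induction with
  | empty => simpa using covD_zero A
  | cons a s has ih => rw [Finset.sum_cons, Finset.sum_cons, covD_add, ih]

lemma smul_matrix_eq_zero {c : PowerSeries K} (hc : c ≠ 0)
    {M : Matrix (Fin r) (Fin r) (PowerSeries K)} (h : c • M = 0) : M = 0 := by
  funext i j
  have := congrFun (congrFun h i) j
  simp only [Matrix.smul_apply, smul_eq_mul, Matrix.zero_apply] at this ⊢
  rcases mul_eq_zero.mp this with h' | h'
  · exact absurd h' hc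
  · exact h'

lemma rel_derivative (A x : Matrix (Fin r) (Fin r) (PowerSeries K))
    (hx : IsCovariantlyConstant A x) (c : Fin (r + 1) → PowerSeries K)
    (hc : ∑ k : Fin (r + 1), c k • x ^ (k : ℕ) = 0) :
    ∑ k : Fin (r + 1), (PowerSeries.derivative K (c k)) • x ^ (k : ℕ) = 0 := by
  have h0 : covD A (∑ k : Fin (r + 1), c k • x ^ (k : ℕ)) = 0 := by
    rw [hc]; exact covD_zero A
  rw [covD_sum] at h0
  have heach : ∀ k : Fin (r + 1), covD A (c k • x ^ (k : ℕ)) =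
      ((PowerSeries.X ^ 2 : PowerSeries K) * PowerSeries.derivative K (c k)) • x ^ (k : ℕ) := by
    intro k
    rw [covD_smul, (isCC_iff A _).mp (flat_pow A hx (k : ℕ)), smul_zero, add_zero]
  rw [Finset.sum_congr rfl (fun k _ => heach k)] at h0
  have h1 : (PowerSeries.X ^ 2 : PowerSeries K) •
      (∑ k : Fin (r + 1), (PowerSeries.derivative K (c k)) • x ^ (k : ℕ)) = 0 := by
    rw [Finset.smul_sum]
    rw [← h0]
    exact Finset.sum_congr rfl fun k _ => (mul_smul _ _ _).symm
  exact smul_matrix_eq_zero (pow_ne_zero 2 (PowerSeries.X_ne_zero : (PowerSeries.X : PowerSeries K) ≠ 0)) h1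

lemma cayley_hamilton_rel (x : Matrix (Fin r) (Fin r) (PowerSeries K)) :
    ∃ c : Fin (r + 1) → PowerSeries K, c ≠ 0 ∧
      ∑ k : Fin (r + 1), c k • x ^ (k : ℕ) = 0 := by
  refine ⟨fun k => x.charpoly.coeff (k : ℕ), ?_, ?_⟩
  · intro hzero
    have hdeg : x.charpoly.natDegree = r := by
      rw [Matrix.charpoly_natDegree_eq_dim, Fintype.card_fin]
    have h1 : x.charpoly.coeff r = 1 := by
      have := x.charpoly_monic
      rw [Polynomial.Monic, Polynomial.leadingCoeff, hdeg] at this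
      exact this
    have := congrFun hzero (Fin.last r)
    simp only [Fin.val_last, Pi.zero_apply] at this
    rw [h1] at this
    exact (one_ne_zero : (1 : PowerSeries K) ≠ 0) this
  · have hCH := Matrix.aeval_self_charpoly x
    rw [Polynomial.aeval_eq_sum_range] at hCH
    have hdeg : x.charpoly.natDegree = r := by
      rw [Matrix.charpoly_natDegree_eq_dim, Fintype.card_fin]
    rw [hdeg] at hCH
    rw [← Finset.sum_range fun i => x.charpoly.coeff i • x ^ i]
    exact hCH


/-- The constant-term ring hom on matrices. -/
noncomputable def constTermHom : Matrix (Fin r) (Fin r) (PowerSeries K) →+*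
    Matrix (Fin r) (Fin r) K := (PowerSeries.constantCoeff (R := K)).mapMatrix

lemma constTermHom_eq (M : Matrix (Fin r) (Fin r) (PowerSeries K)) :
    constTermHom M = constTerm M := by
  funext i j
  simp [constTermHom, RingHom.mapMatrix_apply, Matrix.map_apply, constTerm]

lemma constTermHom_smul (c : PowerSeries K) (M : Matrix (Fin r) (Fin r) (PowerSeries K)) :
    constTermHom (c • M) = PowerSeries.constantCoeff c • constTermHom M := by
  funext i j
  simp [constTermHom, RingHom.mapMatrix_apply, Matrix.map_apply, Matrix.smul_apply,
    smul_eq_mul, map_mul]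

lemma isUnit_of_isUnit_constTermHom {M : Matrix (Fin r) (Fin r) (PowerSeries K)}
    (h : IsUnit (constTermHom M)) : IsUnit M := by
  rw [Matrix.isUnit_iff_isUnit_det] at h ⊢
  rw [PowerSeries.isUnit_iff_constantCoeff]
  have hdet : (constTermHom M).det = PowerSeries.constantCoeff M.det :=
    (RingHom.map_det _ M).symm
  rwa [hdet] at h

theorem nilpotent_of_flat (hr : 1 ≤ r) (A x : Matrix (Fin r) (Fin r) (PowerSeries K))
    (hx : IsCovariantlyConstant A x) (hx0 : constTerm x = 0) : ∃ n, x ^ n = 0 := by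
  classical
  obtain ⟨c₀, hc₀ne, hc₀⟩ := cayley_hamilton_rel x
  let Q : ℕ → Prop := fun n => ∃ c : Fin (r + 1) → PowerSeries K, c ≠ 0 ∧
    (∑ k : Fin (r + 1), c k • x ^ (k : ℕ) = 0) ∧
    (Finset.univ.filter fun k => c k ≠ 0).card = n
  have hQ : ∃ n, Q n := ⟨_, c₀, hc₀ne, hc₀, rfl⟩
  obtain ⟨c, hcne, hcrel, hccard⟩ := Nat.find_spec hQ
  obtain ⟨ks, hks⟩ : ∃ k, c k ≠ 0 := by
    by_contra h
    push_neg at h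
    exact hcne (funext h)
  have hder := rel_derivative A x hx c hcrel
  set e : Fin (r + 1) → PowerSeries K := fun k =>
    c ks * PowerSeries.derivative K (c k) - PowerSeries.derivative K (c ks) * c k with he_def
  have herel : ∑ k : Fin (r + 1), e k • x ^ (k : ℕ) = 0 := by
    have h1 : ∑ k : Fin (r + 1), (c ks * PowerSeries.derivative K (c k)) • x ^ (k : ℕ)
        = 0 := by
      rw [show (∑ k : Fin (r + 1), (c ks * PowerSeries.derivative K (c k)) • x ^ (k : ℕ))
          = c ks • ∑ k : Fin (r + 1), (PowerSeries.derivative K (c k)) • x ^ (k : ℕ) by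
        rw [Finset.smul_sum]
        exact Finset.sum_congr rfl fun k _ => mul_smul _ _ _]
      rw [hder, smul_zero]
    have h2 : ∑ k : Fin (r + 1), (PowerSeries.derivative K (c ks) * c k) • x ^ (k : ℕ)
        = 0 := by
      rw [show (∑ k : Fin (r + 1), (PowerSeries.derivative K (c ks) * c k) • x ^ (k : ℕ))
          = PowerSeries.derivative K (c ks) • ∑ k : Fin (r + 1), (c k) • x ^ (k : ℕ) by
        rw [Finset.smul_sum]
        exact Finset.sum_congr rfl fun k _ => mul_smul _ _ _]
      rw [hcrel, smul_zero]
    calc ∑ k : Fin (r + 1), e k • x ^ (k : ℕ)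
        = ∑ k : Fin (r + 1), ((c ks * PowerSeries.derivative K (c k)) • x ^ (k : ℕ)
          - (PowerSeries.derivative K (c ks) * c k) • x ^ (k : ℕ)) := by
          exact Finset.sum_congr rfl fun k _ => by rw [he_def, sub_smul]
      _ = 0 := by rw [Finset.sum_sub_distrib, h1, h2, sub_zero]
  have he0 : e = 0 := by
    by_contra hene
    have hsub : (Finset.univ.filter fun k => e k ≠ 0) ⊂
        (Finset.univ.filter fun k => c k ≠ 0) := by
      rw [Finset.ssubset_iff_of_subset]
      · refine ⟨ks, ?_, ?_⟩
        · simp only [Finset.mem_filter]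
          exact ⟨Finset.mem_univ _, hks⟩
        · simp only [Finset.mem_filter, not_and, not_not]
          intro _
          rw [he_def]
          ring
      · intro k hk
        simp only [Finset.mem_filter] at hk ⊢
        refine ⟨Finset.mem_univ _, ?_⟩
        intro hck
        apply hk.2
        rw [he_def]
        simp [hck]
    have hcard : (Finset.univ.filter fun k => e k ≠ 0).card < Nat.find hQ := by
      rw [← hccard]
      exact Finset.card_lt_card hsub
    exact Nat.find_min hQ hcard ⟨e, hene, herel, rfl⟩
  have hlam : ∀ k, ∃ lam : K, c k = PowerSeries.C lam * c ks := by
    intro k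
    apply eq_C_mul_of_wronskian hks
    have h := congrFun he0 k
    simp only [he_def, Pi.zero_apply] at h
    linear_combination h
  choose lam hlamspec using hlam
  have hlamks : lam ks ≠ 0 := by
    intro h0
    apply hks
    rw [hlamspec ks, h0, map_zero, zero_mul]
  have hrelK : ∑ k : Fin (r + 1), PowerSeries.C (lam k) • x ^ (k : ℕ) = 0 := by
    apply smul_matrix_eq_zero hks
    rw [Finset.smul_sum, ← hcrel]
    refine Finset.sum_congr rfl fun k _ => ?_
    rw [← mul_smul, mul_comm, ← hlamspec k]
  set S := Finset.univ.filter fun k : Fin (r + 1) => lam k ≠ 0 with hS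
  have hSne : S.Nonempty := ⟨ks, by simp only [hS, Finset.mem_filter]; exact ⟨Finset.mem_univ _, hlamks⟩⟩
  set k₀ := S.min' hSne with hk₀
  have hk₀S : k₀ ∈ S := Finset.min'_mem S hSne
  have hk₀lam : lam k₀ ≠ 0 := by
    have := (Finset.mem_filter.mp hk₀S).2
    exact this
  have hlam0 : lam 0 = 0 := by
    have h := congrArg constTermHom hrelK
    rw [map_sum, map_zero] at h
    have hterm : ∀ k : Fin (r + 1), constTermHom (PowerSeries.C (lam k) • x ^ (k : ℕ))
        = lam k • (constTermHom x) ^ (k : ℕ) := by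
      intro k
      rw [constTermHom_smul, map_pow, PowerSeries.constantCoeff_C]
    rw [Finset.sum_congr rfl fun k _ => hterm k] at h
    rw [constTermHom_eq, hx0] at h
    rw [Fin.sum_univ_succ] at h
    simp only [Fin.val_zero, pow_zero, Fin.val_succ] at h
    rw [Finset.sum_eq_zero (fun i _ => by rw [zero_pow (Nat.succ_ne_zero _), smul_zero])] at h
    rw [add_zero] at h
    have h00 := congrFun (congrFun h ⟨0, hr⟩) ⟨0, hr⟩
    simpa [Matrix.smul_apply, Matrix.one_apply] using h00
  have hk₀ne : (k₀ : ℕ) ≠ 0 := by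
    intro h0
    have hz : k₀ = 0 := Fin.ext h0
    rw [hz] at hk₀lam
    exact hk₀lam hlam0
  have hrelS : ∑ k ∈ S, PowerSeries.C (lam k) • x ^ (k : ℕ) = 0 := by
    rw [Finset.sum_subset (Finset.subset_univ S) (fun k _ hkS => by
      have hlk : lam k = 0 := by
        by_contra hlk
        exact hkS (Finset.mem_filter.mpr ⟨Finset.mem_univ _, hlk⟩)
      rw [hlk, map_zero, zero_smul])]
    exact hrelK
  set u := ∑ k ∈ S, PowerSeries.C (lam k) • x ^ ((k : ℕ) - (k₀ : ℕ)) with hu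
  have hfact : x ^ (k₀ : ℕ) * u = 0 := by
    rw [hu, Finset.mul_sum, ← hrelS]
    refine Finset.sum_congr rfl fun k hk => ?_
    have hle : (k₀ : ℕ) ≤ (k : ℕ) := Finset.min'_le S k hk
    have hexp : (k : ℕ) = (k₀ : ℕ) + ((k : ℕ) - (k₀ : ℕ)) := by omega
    rw [mul_smul_comm, ← pow_add, ← hexp]
  have hu0 : constTermHom u = lam k₀ • 1 := by
    rw [hu, map_sum]
    rw [Finset.sum_eq_single k₀]
    · rw [Nat.sub_self, pow_zero, constTermHom_smul, map_one, PowerSeries.constantCoeff_C]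
    · intro k hk hne
      have hle : (k₀ : ℕ) ≤ (k : ℕ) := Finset.min'_le S k hk
      have hlt : (k₀ : ℕ) < (k : ℕ) := by
        rcases lt_or_eq_of_le hle with h | h
        · exact h
        · exact absurd (Fin.ext h.symm) hne
      rw [constTermHom_smul, map_pow, PowerSeries.constantCoeff_C, constTermHom_eq, hx0,
        zero_pow (by omega : (k : ℕ) - (k₀ : ℕ) ≠ 0), smul_zero]
    · intro h
      exact absurd hk₀S h
  have hUu : IsUnit u := by
    apply isUnit_of_isUnit_constTermHom
    rw [hu0]
    exact ⟨⟨lam k₀ • 1, (lam k₀)⁻¹ • 1,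
      by rw [smul_mul_smul_comm, mul_inv_cancel₀ hk₀lam, one_mul, one_smul],
      by rw [smul_mul_smul_comm, inv_mul_cancel₀ hk₀lam, one_mul, one_smul]⟩, rfl⟩
  refine ⟨(k₀ : ℕ), ?_⟩
  have h0 : x ^ (k₀ : ℕ) * u = 0 * u := by rw [hfact, zero_mul]
  exact hUu.mul_right_cancel h0


section Transfer

variable {K L : Type} [Field K] [Field L] (f : K →+* L)

lemma exists_retraction :
    ∃ π : L →+ K, (∀ a : K, π (f a) = a) ∧ (∀ (a : K) (z : L), π (f a * z) = a * π z) := by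
  letI : Module K L := Module.compHom L f
  have hsmul : ∀ (a : K) (z : L), a • z = f a * z := fun a z => rfl
  let fl : K →ₗ[K] L :=
    { toFun := fun a => f a
      map_add' := fun a b => by simp
      map_smul' := fun a b => by
        simp only [RingHom.id_apply, smul_eq_mul, map_mul, hsmul] }
  have hinj : LinearMap.ker fl = ⊥ := by
    rw [LinearMap.ker_eq_bot]
    intro a b hab
    exact f.injective hab
  obtain ⟨g, hg⟩ := LinearMap.exists_leftInverse_of_injective fl hinj
  refine ⟨g.toAddMonoidHom, ?_, ?_⟩
  · intro a
    have := congrFun (congrArg (fun h => h.toFun) hg) a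
    simp at this
    exact this
  · intro a z
    have := g.map_smul a z
    rw [hsmul] at this
    simpa using this

variable (π : L →+ K)

/-- Coefficientwise retraction of power series. -/
noncomputable def piPS (φ : PowerSeries L) : PowerSeries K :=
  PowerSeries.mk fun n => π (PowerSeries.coeff n φ)

lemma coeff_piPS (n : ℕ) (φ : PowerSeries L) :
    PowerSeries.coeff n (piPS π φ) = π (PowerSeries.coeff n φ) := by
  simp [piPS]

lemma piPS_zero : piPS π (0 : PowerSeries L) = 0 := by
  ext n; simp [coeff_piPS]

lemma piPS_add (φ ψ : PowerSeries L) : piPS π (φ + ψ) = piPS π φ + piPS π ψ := by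
  ext n; simp [coeff_piPS]

lemma piPS_sub (φ ψ : PowerSeries L) : piPS π (φ - ψ) = piPS π φ - piPS π ψ := by
  ext n; simp [coeff_piPS]

lemma piPS_sum {ι : Type*} (s : Finset ι) (φ : ι → PowerSeries L) :
    piPS π (∑ i ∈ s, φ i) = ∑ i ∈ s, piPS π (φ i) := by
  ext n
  rw [coeff_piPS, map_sum, map_sum, map_sum]
  exact Finset.sum_congr rfl fun i _ => (coeff_piPS π n (φ i)).symm

lemma piPS_map_mul_left (hπ2 : ∀ (a : K) (z : L), π (f a * z) = a * π z)
    (ψ : PowerSeries K) (φ : PowerSeries L) :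
    piPS π (PowerSeries.map f ψ * φ) = ψ * piPS π φ := by
  ext n
  rw [coeff_piPS, PowerSeries.coeff_mul, PowerSeries.coeff_mul, map_sum]
  refine Finset.sum_congr rfl fun p _ => ?_
  rw [PowerSeries.coeff_map, hπ2, coeff_piPS]

lemma piPS_mul_map_right (hπ2 : ∀ (a : K) (z : L), π (f a * z) = a * π z)
    (φ : PowerSeries L) (ψ : PowerSeries K) :
    piPS π (φ * PowerSeries.map f ψ) = piPS π φ * ψ := by
  ext n
  rw [coeff_piPS, PowerSeries.coeff_mul, PowerSeries.coeff_mul, map_sum]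
  refine Finset.sum_congr rfl fun p _ => ?_
  rw [PowerSeries.coeff_map, mul_comm, hπ2, coeff_piPS, mul_comm]

lemma piPS_derivative (hπ2 : ∀ (a : K) (z : L), π (f a * z) = a * π z) (φ : PowerSeries L) :
    piPS π (PowerSeries.derivative L φ) = PowerSeries.derivative K (piPS π φ) := by
  ext n
  rw [coeff_piPS, PowerSeries.coeff_derivative, PowerSeries.coeff_derivative, coeff_piPS]
  have : ((n : L) + 1) = f ((n : K) + 1) := by
    rw [map_add, map_natCast, map_one]
  rw [this, mul_comm, hπ2, mul_comm]

lemma piPS_X_sq_mul (hπ2 : ∀ (a : K) (z : L), π (f a * z) = a * π z) (φ : PowerSeries L) :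
    piPS π ((PowerSeries.X : PowerSeries L) ^ 2 * φ)
      = (PowerSeries.X : PowerSeries K) ^ 2 * piPS π φ := by
  have hX : (PowerSeries.X : PowerSeries L) ^ 2
      = PowerSeries.map f ((PowerSeries.X : PowerSeries K) ^ 2) := by
    rw [map_pow, PowerSeries.map_X]
  rw [hX, piPS_map_mul_left f π hπ2]

lemma flat_retract (hπ2 : ∀ (a : K) (z : L), π (f a * z) = a * π z) {r : ℕ} (A : Matrix (Fin r) (Fin r) (PowerSeries K))
    (Et : Matrix (Fin r) (Fin r) (PowerSeries L))
    (hEt : IsCovariantlyConstant (A.map (PowerSeries.map f)) Et) :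
    IsCovariantlyConstant A (fun a b => piPS π (Et a b)) := by
  unfold IsCovariantlyConstant at hEt ⊢
  funext a b
  have hab := congrFun (congrFun hEt a) b
  simp only [Matrix.add_apply, Matrix.sub_apply, Matrix.mul_apply, Matrix.smul_apply,
    Matrix.zero_apply, matDeriv, smul_eq_mul, Matrix.map_apply] at hab ⊢
  have key : (PowerSeries.X : PowerSeries K) ^ 2 * PowerSeries.derivative K (piPS π (Et a b))
      + ∑ c, A a c * piPS π (Et c b) - ∑ c, piPS π (Et a c) * A c b
      = piPS π ((PowerSeries.X : PowerSeries L) ^ 2 * PowerSeries.derivative L (Et a b)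
        + ∑ c, PowerSeries.map f (A a c) * Et c b - ∑ c, Et a c * PowerSeries.map f (A c b)) := by
    rw [piPS_sub π, piPS_add π, piPS_X_sq_mul f π hπ2, piPS_derivative f π hπ2,
      piPS_sum π, piPS_sum π]
    congr 1
    congr 1
    · exact Finset.sum_congr rfl fun c _ => (piPS_map_mul_left f π hπ2 _ _).symm
    · exact Finset.sum_congr rfl fun c _ => (piPS_mul_map_right f π hπ2 _ _).symm
  exact key.trans (by rw [hab, piPS_zero])

end Transfer
end CCSD

/-- Descent of splittings (Lefschetz principle): let `K` be algebraically closed of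
characteristic `0`, `f : K → L` a field extension, `A` a matrix over `K[[τ]]`, and
`E₁⁰, …, E_s⁰` orthogonal idempotents over `K` summing to `1` and commuting with `A(0)`.
If a covariantly constant system of orthogonal idempotents lifting the images of the `Eᵢ⁰`
exists over `L[[τ]]`, then one already exists over `K[[τ]]`. -/
theorem covariantly_constant_splitting_descends
    {K L : Type} [Field K] [CharZero K] [IsAlgClosed K] [Field L] (f : K →+* L)
    (r : ℕ) (hr : 1 ≤ r)
    (A : Matrix (Fin r) (Fin r) (PowerSeries K))
    (s : ℕ) (E0 : Fin s → Matrix (Fin r) (Fin r) K)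
    (hE0sum : ∑ i, E0 i = 1)
    (hE0idem : ∀ i, E0 i * E0 i = E0 i)
    (hE0orth : ∀ i j, i ≠ j → E0 i * E0 j = 0)
    (hE0comm : ∀ i, E0 i * constTerm A = constTerm A * E0 i)
    (hL : ∃ Et : Fin s → Matrix (Fin r) (Fin r) (PowerSeries L),
      (∀ i, IsCovariantlyConstant (A.map (PowerSeries.map f)) (Et i)) ∧
      (∑ i, Et i = 1) ∧
      (∀ i, Et i * Et i = Et i) ∧
      (∀ i j, i ≠ j → Et i * Et j = 0) ∧
      (∀ i, constTerm (Et i) = (E0 i).map f)) :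
    ∃ E : Fin s → Matrix (Fin r) (Fin r) (PowerSeries K),
      (∀ i, IsCovariantlyConstant A (E i)) ∧
      (∑ i, E i = 1) ∧
      (∀ i, E i * E i = E i) ∧
      (∀ i j, i ≠ j → E i * E j = 0) ∧
      (∀ i, constTerm (E i) = E0 i) := by
  classical
  obtain ⟨Et, hEtflat, hEtsum, hEtidem, hEtorth, hEtct⟩ := hL
  obtain ⟨π, hπ1, hπ2⟩ := CCSD.exists_retraction f
  let R := CCSD.flatSubring A
  let F : R →+* Matrix (Fin r) (Fin r) K := CCSD.constTermHom.comp R.subtype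
  have hker : ∀ x ∈ RingHom.ker F, IsNilpotent x := by
    rintro ⟨x, hxmem⟩ hxker
    rw [RingHom.mem_ker] at hxker
    have hct : constTerm x = 0 := by
      rw [← CCSD.constTermHom_eq]
      exact hxker
    obtain ⟨n, hn⟩ := CCSD.nilpotent_of_flat hr A x hxmem hct
    refine ⟨n, ?_⟩
    apply Subtype.ext
    simp only [SubmonoidClass.coe_pow, ZeroMemClass.coe_zero]
    exact hn
  have hco : CompleteOrthogonalIdempotents E0 :=
    ⟨⟨fun i => hE0idem i, fun i j hij => hE0orth i j hij⟩, hE0sum⟩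
  have hrange : ∀ i, E0 i ∈ F.range := by
    intro i
    have hflat : IsCovariantlyConstant A (fun a b => CCSD.piPS π (Et i a b)) :=
      CCSD.flat_retract f π hπ2 A (Et i) (hEtflat i)
    refine ⟨⟨fun a b => CCSD.piPS π (Et i a b), hflat⟩, ?_⟩
    show CCSD.constTermHom (fun a b => CCSD.piPS π (Et i a b)) = E0 i
    refine (CCSD.constTermHom_eq _).trans ?_
    funext a b
    show PowerSeries.constantCoeff (CCSD.piPS π (Et i a b)) = E0 i a b
    rw [← PowerSeries.coeff_zero_eq_constantCoeff_apply, CCSD.coeff_piPS,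
      PowerSeries.coeff_zero_eq_constantCoeff_apply]
    have hc := congrFun (congrFun (hEtct i) a) b
    have hc' : PowerSeries.constantCoeff (Et i a b) = f (E0 i a b) := by
      rw [Matrix.map_apply] at hc
      exact hc
    rw [hc']
    exact hπ1 _
  obtain ⟨e', he', hfe'⟩ :=
    CompleteOrthogonalIdempotents.lift_of_isNilpotent_ker F hker hco hrange
  refine ⟨fun i => ((e' i : R) : Matrix (Fin r) (Fin r) (PowerSeries K)), ?_, ?_, ?_, ?_, ?_⟩
  · intro i
    exact (e' i).2
  · have hs := he'.complete
    have hcoe : ((↑(∑ i, e' i) : Matrix (Fin r) (Fin r) (PowerSeries K)))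
        = ∑ i, ((e' i : R) : Matrix (Fin r) (Fin r) (PowerSeries K)) :=
      AddSubmonoidClass.coe_finset_sum e' Finset.univ
    rw [← hcoe, hs]
    rfl
  · intro i
    have := congrArg Subtype.val (he'.idem i)
    simpa using this
  · intro i j hij
    have := congrArg Subtype.val (he'.ortho hij)
    simpa using this
  · intro i
    have hfi := congrFun hfe' i
    rw [← CCSD.constTermHom_eq]
    exact hfi
end
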